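/- Fix 0 < q < 1 and consider the Markov chain M_n = max(M_{n-1}, Z_n) - 1 driven by i.i.d. Geometric(1-q) variables. For a state j, let R_j = min{n ≥ 0 : M_n = j} denote the first visit time to j. Then for every i ≥ 1, E_i[R_{i-1}] ≥ E_{i+1}[R_i], where E_t denotes expectation for the chain started at M_0 = t. -/

import Mathlib

/-!
Drive the chains started at `i + 1` and at `i` by the same sequence `Z`. By induction the
upper chain never exceeds the lower one by more than `1`, so when the lower chain first
reaches `i - 1` the upper one is at most `i`. The upper chain moves down by at most one per
step, so it must already have visited `i`. Hence `R_i` from `i + 1` is at most `R_{i-1}`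
from `i` on every trajectory, and integrating gives the claim.
-/

open MeasureTheory
open scoped ENNReal

noncomputable section

/-- The chain `M_0 = m0`, `M_n = max (M_{n-1}, Z_n) - 1`. -/
def chainM (m0 : ℕ) (z : ℕ → ℕ) : ℕ → ℕ
  | 0 => m0
  | n + 1 => max (chainM m0 z n) (z (n + 1)) - 1

/-- The first visit time `R_j = min {n ≥ 0 : M_n = j}` of a trajectory `M`, as an
element of `ℝ≥0∞` (equal to `∞` if the state `j` is never visited). -/
noncomputable def hitTime (M : ℕ → ℕ) (j : ℕ) : ℝ≥0∞ :=
  ⨅ (n : ℕ) (_ : M n = j), (n : ℝ≥0∞)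

lemma Nat.exists_le_eq_of_le_succ_add_one {f : ℕ → ℕ} (hf : ∀ k, f k ≤ f (k + 1) + 1)
    {i n : ℕ} (h0 : i ≤ f 0) (hn : f n ≤ i) : ∃ m ≤ n, f m = i := by
  induction n with
  | zero => exact ⟨0, le_rfl, by omega⟩
  | succ n ih =>
    by_cases h : f n ≤ i
    · obtain ⟨m, hm, he⟩ := ih h
      exact ⟨m, hm.trans n.le_succ, he⟩
    · exact ⟨n + 1, le_rfl, by have := hf n; omega⟩

lemma hitTime_le {M : ℕ → ℕ} {j n : ℕ} (h : M n = j) : hitTime M j ≤ n :=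
  iInf₂_le n h

lemma hitTime_le_hitTime {M M' : ℕ → ℕ} {j j' : ℕ}
    (h : ∀ n, M' n = j' → ∃ m ≤ n, M m = j) : hitTime M j ≤ hitTime M' j' := by
  refine le_iInf₂ fun n hn => ?_
  obtain ⟨m, hmn, hm⟩ := h n hn
  exact (hitTime_le hm).trans (Nat.cast_le.mpr hmn)

section chainM

variable (z : ℕ → ℕ)

lemma chainM_le_chainM_succ_add_one (m0 n : ℕ) : chainM m0 z n ≤ chainM m0 z (n + 1) + 1 := by
  simp only [chainM]
  omega

lemma chainM_succ_le_add_one (m0 n : ℕ) : chainM (m0 + 1) z n ≤ chainM m0 z n + 1 := by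
  induction n with
  | zero => simp only [chainM, le_refl]
  | succ n ih =>
    simp only [chainM]
    omega

lemma hitTime_chainM_succ_le (j : ℕ) :
    hitTime (chainM (j + 2) z) (j + 1) ≤ hitTime (chainM (j + 1) z) j := by
  refine hitTime_le_hitTime fun n hn => ?_
  refine Nat.exists_le_eq_of_le_succ_add_one (chainM_le_chainM_succ_add_one z _)
    (Nat.le_succ _) ?_
  have hcoupled := chainM_succ_le_add_one z (j + 1) n
  rwa [hn] at hcoupled

end chainM

theorem expected_passage_time_antitone_general
    {Ω : Type*} [MeasurableSpace Ω] (P : Measure Ω)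
    (Z : ℕ → Ω → ℕ)
    (i : ℕ) (hi : 1 ≤ i) :
    ∫⁻ ω, hitTime (chainM (i + 1) (fun n => Z n ω)) i ∂P
      ≤ ∫⁻ ω, hitTime (chainM i (fun n => Z n ω)) (i - 1) ∂P := by
  obtain ⟨j, rfl⟩ : ∃ j, i = j + 1 := ⟨i - 1, by omega⟩
  exact lintegral_mono fun ω => hitTime_chainM_succ_le (fun n => Z n ω) j

/-- **Monotonicity of expected passage times.** For the chain
`M_n = max(M_{n-1}, Z_n) - 1` driven by i.i.d. Geometric(1-q) variables and
any `i ≥ 1`, `E_i[R_{i-1}] ≥ E_{i+1}[R_i]`. -/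
theorem expected_passage_time_antitone
    {Ω : Type*} [MeasurableSpace Ω] (P : Measure Ω) [IsProbabilityMeasure P]
    (q : ℝ) (hq0 : 0 < q) (hq1 : q < 1)
    (Z : ℕ → Ω → ℕ)
    (hmeas : ∀ i, Measurable (Z i))
    (hindep : ProbabilityTheory.iIndepFun Z P)
    (hpos : ∀ i ω, 1 ≤ Z i ω)
    (hgeom : ∀ i k, 1 ≤ k →
      P {ω | Z i ω = k} = ENNReal.ofReal ((1 - q) * q ^ (k - 1)))
    (i : ℕ) (hi : 1 ≤ i) :
    ∫⁻ ω, hitTime (chainM (i + 1) (fun n => Z n ω)) i ∂P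
      ≤ ∫⁻ ω, hitTime (chainM i (fun n => Z n ω)) (i - 1) ∂P :=
  expected_passage_time_antitone_general P Z i hi

end
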